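/- Let A be an m×n complex matrix (m ≥ n) with full column rank and nonzero rows, let x solve Ax = b, and let (x_k) be the randomized Kaczmarz iterates with row j chosen with probability ‖a_j‖₂²/‖A‖_F² at each step, independently. Then for every ε ∈ (0,1) and every integer k ≥ 2κ(A)²·log(1/ε), one has E‖x_k − x‖₂² ≤ ε²·‖x_0 − x‖₂², where κ(A) = ‖A‖_F/σ_min(A). -/

import Mathlib

open scoped BigOperators

/-- One step of the Kaczmarz iteration: orthogonal projection of `y` onto the
hyperplane `{u : ⟨a j, u⟩ = b j}`. -/
noncomputable def kacStep {m n : ℕ} (a : Fin m → EuclideanSpace ℂ (Fin n))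
    (b : Fin m → ℂ) (j : Fin m) (y : EuclideanSpace ℂ (Fin n)) :
    EuclideanSpace ℂ (Fin n) :=
  y + ((b j - (inner ℂ (a j) y : ℂ)) / ((‖a j‖ : ℂ) ^ 2)) • a j

/-- The Kaczmarz iterate obtained from `x0` by applying the steps with the row
indices listed in `l` (in order). -/
noncomputable def kacIter {m n : ℕ} (a : Fin m → EuclideanSpace ℂ (Fin n))
    (b : Fin m → ℂ) (x0 : EuclideanSpace ℂ (Fin n)) (l : List (Fin m)) :
    EuclideanSpace ℂ (Fin n) :=
  l.foldl (fun y j => kacStep a b j y) x0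

/-- The squared Frobenius norm `‖A‖_F² = ∑ j ‖a j‖₂²`. -/
noncomputable def frobSq {m n : ℕ} (a : Fin m → EuclideanSpace ℂ (Fin n)) : ℝ :=
  ∑ j, ‖a j‖ ^ 2

/-- The smallest singular value `σ_min(A) = inf {‖Az‖₂ : ‖z‖₂ = 1}`, where
`‖Az‖₂² = ∑ j ‖⟨a j, z⟩‖²`. -/
noncomputable def sigmaMin {m n : ℕ} (a : Fin m → EuclideanSpace ℂ (Fin n)) : ℝ :=
  sInf {r : ℝ | ∃ z : EuclideanSpace ℂ (Fin n), ‖z‖ = 1 ∧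
    r = Real.sqrt (∑ j, ‖(inner ℂ (a j) z : ℂ)‖ ^ 2)}

/-- The scaled condition number `κ(A) = ‖A‖_F / σ_min(A)`. -/
noncomputable def scaledCond {m n : ℕ} (a : Fin m → EuclideanSpace ℂ (Fin n)) : ℝ :=
  Real.sqrt (frobSq a) / sigmaMin a

/-
Each Kaczmarz step replaces the error `e = y - x` by its orthogonal projection onto `a_jᗮ`, so
`‖e'‖² = ‖e‖² - |⟨a_j, e⟩|² / ‖a_j‖²`. Averaging with the weights `‖a_j‖² / ‖A‖_F²` gives
`E ‖e'‖² = ‖e‖² - ‖A e‖² / ‖A‖_F² ≤ (1 - κ(A)⁻²) ‖e‖²`, hence after `k` independent steps the mean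
squared error is at most `(1 - κ(A)⁻²)ᵏ ‖x₀ - x‖² ≤ exp (-k / κ(A)²) ‖x₀ - x‖² ≤ ε² ‖x₀ - x‖²`.
-/

open Finset

section Projection

variable {𝕜 E : Type*} [RCLike 𝕜] [NormedAddCommGroup E] [InnerProductSpace 𝕜 E]

theorem norm_sub_inner_div_smul_sq (a e : E) :
    ‖e - (inner 𝕜 a e / (‖a‖ : 𝕜) ^ 2) • a‖ ^ 2 = ‖e‖ ^ 2 - ‖inner 𝕜 a e‖ ^ 2 / ‖a‖ ^ 2 := by
  rcases eq_or_ne a 0 with rfl | ha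
  · simp
  have ha' : (0 : ℝ) < ‖a‖ := norm_pos_iff.mpr ha
  rw [@norm_sub_sq 𝕜, inner_smul_right, norm_smul, ← inner_conj_symm e a, div_mul_eq_mul_div,
    RCLike.mul_conj, norm_div, norm_pow, RCLike.norm_ofReal, abs_of_pos ha']
  norm_cast
  field_simp
  ring

end Projection

section Iteration

variable {α β : Type*} [Fintype α]

/-- The left side is the mean of `f` after `k` independent steps `T_J` with `P(J = j) = w j`. -/
theorem sum_prod_mul_foldl_le_pow_mul (w : α → ℝ) (hw : ∀ j, 0 ≤ w j) (T : α → β → β)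
    (f : β → ℝ) {q : ℝ} (hq : 0 ≤ q) (hstep : ∀ y, ∑ j, w j * f (T j y) ≤ q * f y)
    (k : ℕ) (y : β) :
    ∑ ω : Fin k → α, (∏ i, w (ω i)) * f ((List.ofFn ω).foldl (fun y j => T j y) y)
      ≤ q ^ k * f y := by
  induction k generalizing y with
  | zero => simp
  | succ k ih =>
    rw [← (Fin.consEquiv fun _ => α).sum_comp, Fintype.sum_prod_type]
    calc ∑ j, ∑ ω : Fin k → α, (∏ i, w (Fin.cons j ω i : α)) *
          f ((List.ofFn (Fin.cons j ω : Fin (k + 1) → α)).foldl (fun y j => T j y) y)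
        = ∑ j, w j * ∑ ω : Fin k → α, (∏ i, w (ω i)) *
            f ((List.ofFn ω).foldl (fun y j => T j y) (T j y)) := by
          simp only [Fin.prod_univ_succ, List.ofFn_succ, Fin.cons_zero, Fin.cons_succ,
            List.foldl_cons, mul_sum, mul_assoc]
      _ ≤ ∑ j, w j * (q ^ k * f (T j y)) :=
          sum_le_sum fun j _ => mul_le_mul_of_nonneg_left (ih (T j y)) (hw j)
      _ = q ^ k * ∑ j, w j * f (T j y) := by
          rw [mul_sum]; exact sum_congr rfl fun j _ => by ring
      _ ≤ q ^ k * (q * f y) := mul_le_mul_of_nonneg_left (hstep y) (by positivity)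
      _ = q ^ (k + 1) * f y := by ring

end Iteration

theorem one_sub_pow_le_sq {t ε : ℝ} (ht1 : t ≤ 1) (hε : 0 < ε) {k : ℕ}
    (hk : 2 * Real.log (1 / ε) ≤ t * k) : (1 - t) ^ k ≤ ε ^ 2 :=
  calc (1 - t) ^ k ≤ Real.exp (-t) ^ k :=
        pow_le_pow_left₀ (by linarith) (by linarith [Real.add_one_le_exp (-t)]) k
    _ = Real.exp (-(t * k)) := by rw [← Real.exp_nat_mul]; ring_nf
    _ ≤ Real.exp (-(2 * Real.log (1 / ε))) := Real.exp_le_exp.mpr (by linarith)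
    _ = ε ^ 2 := by
        rw [one_div, Real.log_inv, mul_neg, neg_neg, ← Real.exp_log hε, ← Real.exp_nat_mul,
          Real.exp_log hε]
        norm_num

variable {m n : ℕ} (a : Fin m → EuclideanSpace ℂ (Fin n))

theorem norm_kacStep_sub_sq {b : Fin m → ℂ} {x : EuclideanSpace ℂ (Fin n)}
    (hx : ∀ j, inner ℂ (a j) x = b j) (j : Fin m) (y : EuclideanSpace ℂ (Fin n)) :
    ‖kacStep a b j y - x‖ ^ 2 = ‖y - x‖ ^ 2 - ‖inner ℂ (a j) (y - x)‖ ^ 2 / ‖a j‖ ^ 2 := by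
  have h : kacStep a b j y - x = (y - x) - (inner ℂ (a j) (y - x) / (‖a j‖ : ℂ) ^ 2) • a j := by
    rw [kacStep, ← hx j, inner_sub_right, ← neg_sub (inner ℂ (a j) y), neg_div, neg_smul]
    abel
  rw [h]
  exact norm_sub_inner_div_smul_sq (a j) (y - x)

theorem sum_norm_inner_sq_le (z : EuclideanSpace ℂ (Fin n)) :
    ∑ j, ‖inner ℂ (a j) z‖ ^ 2 ≤ frobSq a * ‖z‖ ^ 2 := by
  rw [frobSq, sum_mul]
  gcongr with j
  rw [← mul_pow]
  exact pow_le_pow_left₀ (norm_nonneg _) (norm_inner_le_norm _ _) 2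

theorem sigmaMin_nonneg : 0 ≤ sigmaMin a :=
  Real.sInf_nonneg fun _ ⟨_, _, hr⟩ => hr ▸ Real.sqrt_nonneg _

theorem sigmaMin_le {z : EuclideanSpace ℂ (Fin n)} (hz : ‖z‖ = 1) :
    sigmaMin a ≤ √(∑ j, ‖inner ℂ (a j) z‖ ^ 2) :=
  csInf_le ⟨0, fun _ ⟨_, _, hr⟩ => hr ▸ Real.sqrt_nonneg _⟩ ⟨z, hz, rfl⟩

theorem sigmaMin_sq_mul_norm_sq_le (z : EuclideanSpace ℂ (Fin n)) :
    sigmaMin a ^ 2 * ‖z‖ ^ 2 ≤ ∑ j, ‖inner ℂ (a j) z‖ ^ 2 := by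
  rcases eq_or_ne z 0 with rfl | hz
  · simp
  have hz' : 0 < ‖z‖ := norm_pos_iff.mpr hz
  set u : EuclideanSpace ℂ (Fin n) := ((‖z‖⁻¹ : ℝ) : ℂ) • z
  have hu : ‖u‖ = 1 := by
    rw [norm_smul, Complex.norm_real, Real.norm_of_nonneg (by positivity), inv_mul_cancel₀ hz'.ne']
  have hAu : ∑ j, ‖inner ℂ (a j) u‖ ^ 2 = (∑ j, ‖inner ℂ (a j) z‖ ^ 2) / ‖z‖ ^ 2 := by
    simp only [u, inner_smul_right, norm_mul, Complex.norm_real, mul_pow, ← mul_sum]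
    rw [Real.norm_of_nonneg (by positivity)]
    field_simp
  have h := pow_le_pow_left₀ (sigmaMin_nonneg a) (sigmaMin_le a hu) 2
  rw [Real.sq_sqrt (by positivity), hAu, le_div_iff₀ (by positivity)] at h
  exact h

theorem sigmaMin_pos [NeZero n]
    (hrank : ∀ z : EuclideanSpace ℂ (Fin n), (∀ j, inner ℂ (a j) z = 0) → z = 0) :
    0 < sigmaMin a := by
  have hne : (Metric.sphere (0 : EuclideanSpace ℂ (Fin n)) 1).Nonempty :=
    NormedSpace.sphere_nonempty.mpr zero_le_one
  obtain ⟨z₀, hz₀, hmin⟩ := (isCompact_sphere (0 : EuclideanSpace ℂ (Fin n)) 1).exists_isMinOn hne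
    (f := fun z => √(∑ j, ‖inner ℂ (a j) z‖ ^ 2)) (by fun_prop)
  rw [mem_sphere_zero_iff_norm] at hz₀
  have hA : 0 < ∑ j, ‖inner ℂ (a j) z₀‖ ^ 2 := by
    refine (sum_nonneg fun j _ => by positivity).lt_of_ne fun h => ?_
    have hAz₀ : ∀ j, inner ℂ (a j) z₀ = 0 := fun j => by
      simpa using (sum_eq_zero_iff_of_nonneg fun j _ => by positivity).mp h.symm j (mem_univ j)
    simp [hrank z₀ hAz₀] at hz₀
  refine (Real.sqrt_pos.mpr hA).trans_le (le_csInf ⟨_, z₀, hz₀, rfl⟩ ?_)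
  rintro r ⟨z, hz, rfl⟩
  exact hmin (mem_sphere_zero_iff_norm.mpr hz)

theorem sigmaMin_sq_le_frobSq [NeZero n] : sigmaMin a ^ 2 ≤ frobSq a := by
  obtain ⟨z, hz⟩ := exists_ne (0 : EuclideanSpace ℂ (Fin n))
  have hz' : 0 < ‖z‖ ^ 2 := by positivity
  exact le_of_mul_le_mul_right
    ((sigmaMin_sq_mul_norm_sq_le a z).trans (sum_norm_inner_sq_le a z)) hz'

theorem sum_weight_mul_norm_kacStep_sub_sq_le {b : Fin m → ℂ} {x : EuclideanSpace ℂ (Fin n)}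
    (hx : ∀ j, inner ℂ (a j) x = b j) (hF : 0 < frobSq a) (y : EuclideanSpace ℂ (Fin n)) :
    ∑ j, ‖a j‖ ^ 2 / frobSq a * ‖kacStep a b j y - x‖ ^ 2
      ≤ (1 - sigmaMin a ^ 2 / frobSq a) * ‖y - x‖ ^ 2 := by
  have hterm : ∀ j, ‖a j‖ ^ 2 / frobSq a * ‖kacStep a b j y - x‖ ^ 2
      = (‖a j‖ ^ 2 * ‖y - x‖ ^ 2 - ‖inner ℂ (a j) (y - x)‖ ^ 2) / frobSq a := fun j => by
    rw [norm_kacStep_sub_sq a hx]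
    rcases eq_or_ne (a j) 0 with h | h
    · simp [h]
    · field_simp
  simp_rw [hterm, ← sum_div, sum_sub_distrib, ← sum_mul]
  rw [← frobSq, sub_div, mul_div_cancel_left₀ _ hF.ne', sub_mul, one_mul, div_mul_eq_mul_div]
  gcongr
  exact sigmaMin_sq_mul_norm_sq_le a (y - x)

theorem randomized_kaczmarz_iteration_count_general
    (m n : ℕ)
    (a : Fin m → EuclideanSpace ℂ (Fin n)) (b : Fin m → ℂ)
    (hrank : ∀ z : EuclideanSpace ℂ (Fin n), (∀ j, (inner ℂ (a j) z : ℂ) = 0) → z = 0)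
    (x : EuclideanSpace ℂ (Fin n)) (hx : ∀ j, (inner ℂ (a j) x : ℂ) = b j)
    (x0 : EuclideanSpace ℂ (Fin n))
    (ε : ℝ) (hε : ε ∈ Set.Ioo (0 : ℝ) 1)
    (k : ℕ) (hk : 2 * (scaledCond a) ^ 2 * Real.log (1 / ε) ≤ k) :
    ∑ ω : Fin k → Fin m,
        (∏ i, ‖a (ω i)‖ ^ 2 / frobSq a) * ‖kacIter a b x0 (List.ofFn ω) - x‖ ^ 2
      ≤ ε ^ 2 * ‖x0 - x‖ ^ 2 := by
  rcases eq_zero_or_neZero n with rfl | _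
  · have h0 (v : EuclideanSpace ℂ (Fin 0)) : ‖v‖ = 0 := by rw [Subsingleton.elim v 0, norm_zero]
    simp [h0]
  have hσ := sigmaMin_pos a hrank
  have hF : 0 < frobSq a := (pow_pos hσ 2).trans_le (sigmaMin_sq_le_frobSq a)
  have ht : sigmaMin a ^ 2 / frobSq a ≤ 1 := (div_le_one hF).mpr (sigmaMin_sq_le_frobSq a)
  have hrate : (1 - sigmaMin a ^ 2 / frobSq a) ^ k ≤ ε ^ 2 := by
    refine one_sub_pow_le_sq ht hε.1 ?_
    rw [scaledCond, div_pow, Real.sq_sqrt hF.le] at hk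
    calc 2 * Real.log (1 / ε)
        = sigmaMin a ^ 2 / frobSq a * (2 * (frobSq a / sigmaMin a ^ 2) * Real.log (1 / ε)) := by
          field_simp
      _ ≤ sigmaMin a ^ 2 / frobSq a * k := by gcongr
  calc _ ≤ (1 - sigmaMin a ^ 2 / frobSq a) ^ k * ‖x0 - x‖ ^ 2 :=
        sum_prod_mul_foldl_le_pow_mul (fun j => ‖a j‖ ^ 2 / frobSq a) (fun j => by positivity)
          (kacStep a b) (fun y => ‖y - x‖ ^ 2)
          (sub_nonneg.mpr ht)
          (sum_weight_mul_norm_kacStep_sub_sq_le a hx hF) k x0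
    _ ≤ ε ^ 2 * ‖x0 - x‖ ^ 2 := by gcongr

/-- **Iteration count for accuracy ε**: for every `ε ∈ (0,1)` and every
`k ≥ 2κ(A)² log(1/ε)`, one has `E ‖x_k − x‖₂² ≤ ε² ‖x0 − x‖₂²`. -/
theorem randomized_kaczmarz_iteration_count
    (m n : ℕ) (hmn : n ≤ m)
    (a : Fin m → EuclideanSpace ℂ (Fin n)) (ha : ∀ j, a j ≠ 0) (b : Fin m → ℂ)
    (hrank : ∀ z : EuclideanSpace ℂ (Fin n), (∀ j, (inner ℂ (a j) z : ℂ) = 0) → z = 0)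
    (x : EuclideanSpace ℂ (Fin n)) (hx : ∀ j, (inner ℂ (a j) x : ℂ) = b j)
    (x0 : EuclideanSpace ℂ (Fin n))
    (ε : ℝ) (hε : ε ∈ Set.Ioo (0 : ℝ) 1)
    (k : ℕ) (hk : 2 * (scaledCond a) ^ 2 * Real.log (1 / ε) ≤ k) :
    ∑ ω : Fin k → Fin m,
        (∏ i, ‖a (ω i)‖ ^ 2 / frobSq a) * ‖kacIter a b x0 (List.ofFn ω) - x‖ ^ 2
      ≤ ε ^ 2 * ‖x0 - x‖ ^ 2 :=
  randomized_kaczmarz_iteration_count_general m n a b hrank x hx x0 ε hε k hk
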